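/- arXiv:2301.04403 — 2 statements merged into one kernel-verified Lean document; each statement's English description precedes it below -/
import Mathlib

section
/- Let r > 1/2. There exists a constant C = C(r) > 0 such that for all f, g ∈ H^r(𝕋): ‖J^{−1}( g · (J f) )‖_r ≤ C ‖f‖_r ‖g‖_r. -/
open MeasureTheory Complex

noncomputable section

local notation "𝕋" => AddCircle (2 * Real.pi)

instance : Fact (0 < 2 * Real.pi) := ⟨by positivity⟩

def fc (f : 𝕋 → ℂ) (k : ℤ) : ℂ := fourierCoeff f k

def sNormSq (α : ℝ) (f : 𝕋 → ℂ) : ℝ :=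
  ∑' k : ℤ, (1 + (k : ℝ) ^ 2) ^ α * ‖fc f k‖ ^ 2

def sNorm (α : ℝ) (f : 𝕋 → ℂ) : ℝ := Real.sqrt (sNormSq α f)

def MemH (α : ℝ) (f : 𝕋 → ℂ) : Prop :=
  MemLp f 2 volume ∧ Summable fun k : ℤ => (1 + (k : ℝ) ^ 2) ^ α * ‖fc f k‖ ^ 2

def mulOp (m : ℤ → ℂ) (f : 𝕋 → ℂ) : 𝕋 → ℂ :=
  fun x => ∑' k : ℤ, m k * fc f k * fourier k x

def cconj (f : 𝕋 → ℂ) : 𝕋 → ℂ := fun x => (starRingEnd ℂ) (f x)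

/-- Bessel potential `J^α`, with symbol `(1+k²)^{α/2}`. -/
def Jop (α : ℝ) : (𝕋 → ℂ) → (𝕋 → ℂ) :=
  mulOp fun k => (((1 + (k : ℝ) ^ 2) ^ (α / 2) : ℝ) : ℂ)

/-- The operator `|∂ₓ|^α`, with symbol `|k|^α` for `k ≠ 0`, annihilating the zero mode. -/
def absD (α : ℝ) : (𝕋 → ℂ) → (𝕋 → ℂ) :=
  mulOp fun k => if k = 0 then 0 else ((|(k : ℝ)| ^ α : ℝ) : ℂ)

/-- `∂ₓ^m` for `m : ℤ`: symbol `(ik)^m` for `k ≠ 0`, annihilating the zero mode. -/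
def Dpow (m : ℤ) : (𝕋 → ℂ) → (𝕋 → ℂ) :=
  mulOp fun k => if k = 0 then 0 else (Complex.I * (k : ℂ)) ^ m

/-- Symbol of `⟨∂ₓ²⟩`: `√(k² + k⁴)`. -/
def brSym (k : ℤ) : ℝ := Real.sqrt ((k : ℝ) ^ 2 + (k : ℝ) ^ 4)

/-- `e^{it∂ₓ²}`, with symbol `e^{-itk²}`. -/
def eitDxx (t : ℝ) : (𝕋 → ℂ) → (𝕋 → ℂ) :=
  mulOp fun k => Complex.exp (-(Complex.I * t * (k : ℂ) ^ 2))

/-- `e^{it∂ₓ²} - 1`, with symbol `e^{-itk²} - 1`. -/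
def eitDxxm1 (t : ℝ) : (𝕋 → ℂ) → (𝕋 → ℂ) :=
  mulOp fun k => Complex.exp (-(Complex.I * t * (k : ℂ) ^ 2)) - 1

/-- `⟨∂ₓ²⟩⁻¹`, symbol `(k²+k⁴)^{-1/2}` for `k ≠ 0`, `0` at `k = 0`. -/
def brInv : (𝕋 → ℂ) → (𝕋 → ℂ) :=
  mulOp fun k => if k = 0 then 0 else (((brSym k)⁻¹ : ℝ) : ℂ)

/-- Symbol of `A = ⟨∂ₓ²⟩ + ∂ₓ²`: `√(k²+k⁴) - k²`. -/
def Asym (k : ℤ) : ℝ := brSym k - (k : ℝ) ^ 2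

/-- `A = ⟨∂ₓ²⟩ + ∂ₓ²`. -/
def Aop : (𝕋 → ℂ) → (𝕋 → ℂ) := mulOp fun k => ((Asym k : ℝ) : ℂ)

/-- `e^{itA} - 1`. -/
def eitAm1 (t : ℝ) : (𝕋 → ℂ) → (𝕋 → ℂ) :=
  mulOp fun k => Complex.exp (Complex.I * t * ((Asym k : ℝ) : ℂ)) - 1

/-- Symbol of `B = ⟨∂ₓ²⟩⁻¹ ∂ₓ²`: `-k²/√(k²+k⁴)` for `k ≠ 0`, `0` at `k = 0`. -/
def Bsym (k : ℤ) : ℝ := if k = 0 then 0 else -(k : ℝ) ^ 2 / brSym k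

/-- `B = ⟨∂ₓ²⟩⁻¹ ∂ₓ²`. -/
def Bop : (𝕋 → ℂ) → (𝕋 → ℂ) := mulOp fun k => ((Bsym k : ℝ) : ℂ)

/-- `e^{it⟨∂ₓ²⟩}`, with symbol `e^{it√(k²+k⁴)}`. -/
def eitBr (t : ℝ) : (𝕋 → ℂ) → (𝕋 → ℂ) :=
  mulOp fun k => Complex.exp (Complex.I * t * ((brSym k : ℝ) : ℂ))

/-- `e^{it⟨∂ₓ²⟩} - 1`. -/
def eitBrm1 (t : ℝ) : (𝕋 → ℂ) → (𝕋 → ℂ) :=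
  mulOp fun k => Complex.exp (Complex.I * t * ((brSym k : ℝ) : ℂ)) - 1

/-- `B^τ = B e^{iτ⟨∂ₓ²⟩}`, as a single multiplier. -/
def Btau (τ : ℝ) : (𝕋 → ℂ) → (𝕋 → ℂ) :=
  mulOp fun k => ((Bsym k : ℝ) : ℂ) * Complex.exp (Complex.I * τ * ((brSym k : ℝ) : ℂ))

/-- `ψ₁(y) = ∫₀¹ e^{ys} ds`. -/
def psi1 (y : ℂ) : ℂ := ∫ s in (0 : ℝ)..1, Complex.exp (y * s)

/-- `ψ₁(it∂ₓ²)`, with symbol `ψ₁(-itk²)`. -/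
def psiOp (t : ℝ) : (𝕋 → ℂ) → (𝕋 → ℂ) :=
  mulOp fun k => psi1 (-(Complex.I * t * (k : ℂ) ^ 2))

/-- Sobolev norm (squared) of a Fourier coefficient sequence. -/
def seqNormSq (α : ℝ) (c : ℤ → ℂ) : ℝ :=
  ∑' k : ℤ, (1 + (k : ℝ) ^ 2) ^ α * ‖c k‖ ^ 2

def seqNorm (α : ℝ) (c : ℤ → ℂ) : ℝ := Real.sqrt (seqNormSq α c)

/-- Fourier coefficients of `P₁^τ(f)`. -/
def P1coef (τ : ℝ) (f : 𝕋 → ℂ) (k : ℤ) : ℂ :=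
  if k = 0 then 0 else
    ∑' k₁ : ℤ, ((k₁ : ℂ) ^ 2 / (k : ℂ) ^ 2) *
      (∫ s in (0 : ℝ)..τ,
        (Complex.exp (-(2 * Complex.I * s * (((k - k₁ : ℤ)) : ℂ) ^ 2)) - 1) *
        (Complex.exp (-(2 * Complex.I * s * (k : ℂ) * (k₁ : ℂ))) - 1)) *
      fc (cconj f) k₁ * fc (cconj f) (k - k₁)

/-- Fourier coefficients of `P₂^τ(f)`. -/
def P2coef (τ : ℝ) (f : 𝕋 → ℂ) (k : ℤ) : ℂ :=
  if k = 0 then 0 else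
    ∑' k₁ : ℤ, ((2 * (k₁ : ℂ) * (((k - k₁ : ℤ)) : ℂ)) / (k : ℂ) ^ 2) *
      (∫ s in (0 : ℝ)..τ,
        (Complex.exp (-(2 * Complex.I * s * (k : ℂ) ^ 2)) - 1) *
        (Complex.exp (2 * Complex.I * s * (k₁ : ℂ) * (((k - k₁ : ℤ)) : ℂ)) - 1)) *
      fc (cconj f) k₁ * fc (cconj f) (k - k₁)

def L1op (τ : ℝ) (f : 𝕋 → ℂ) : 𝕋 → ℂ :=
  (-(Complex.I / 2)) • Dpow (-2) ((eitDxx (2 * τ) (Dpow (-2) (cconj f))) * (Dpow 2 (cconj f)))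
    + (Complex.I / 2) • Dpow (-2) ((Dpow 2 (cconj f)) * (Dpow (-2) (cconj f)))

def L2op (τ : ℝ) (f : 𝕋 → ℂ) : 𝕋 → ℂ :=
  (-(Complex.I / 2)) • eitDxx τ (Dpow (-3) ((eitDxx τ (Dpow 1 (cconj f))) * (eitDxx (-τ) (cconj f))))
    + (Complex.I / 2) • Dpow (-3) ((Dpow 1 (cconj f)) * (cconj f))
    - (τ : ℂ) • Dpow (-2) ((Dpow 2 (cconj f)) * (cconj f))

def L3op (τ : ℝ) (f : 𝕋 → ℂ) : 𝕋 → ℂ :=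
  (-Complex.I) • Dpow (-4) (eitDxxm1 (2 * τ) ((Dpow 1 (cconj f)) * (Dpow 1 (cconj f))))

def L4op (τ : ℝ) (f : 𝕋 → ℂ) : 𝕋 → ℂ :=
  Complex.I • Dpow (-2) (eitDxx (-τ) ((eitDxx τ (cconj f)) * (eitDxx τ (cconj f))))
    - Complex.I • Dpow (-2) ((cconj f) * (cconj f))
    - ((2 * τ : ℝ) : ℂ) • Dpow (-2) ((Dpow 1 (cconj f)) * (Dpow 1 (cconj f)))

def I1op (τ : ℝ) (f : 𝕋 → ℂ) : 𝕋 → ℂ :=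
  (Complex.I / 2) • ((Dpow (-1) f) * (Dpow (-1) f)
    - eitDxx τ ((eitDxx (-τ) (Dpow (-1) f)) * (eitDxx (-τ) (Dpow (-1) f))))

def I2op (τ : ℝ) (f : 𝕋 → ℂ) : 𝕋 → ℂ :=
  (-(Complex.I / 2)) • eitDxx τ (Dpow (-1) ((eitDxx (-τ) f) * (eitDxx τ (Dpow (-1) (cconj f)))))
    + (Complex.I / 2) • Dpow (-1) (f * (Dpow (-1) (cconj f)))
    + fun _ => ((τ * sNormSq 0 f : ℝ) : ℂ)

/-- The first-order low regularity exponential integrator `Ψ₁^τ` at time level `t_n`. -/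
def Psi1 (τ a b tn : ℝ) (f : 𝕋 → ℂ) : 𝕋 → ℂ :=
  eitBr τ f
    - (Complex.I / 4) • Btau τ ((2 : ℂ) • L1op τ f + (2 : ℂ) • L2op τ f + L3op τ f
        + L4op τ f + I1op τ f + (2 : ℂ) • I2op τ f)
    - (Complex.I * τ * ((a * tn + b : ℝ) : ℂ)) • Btau τ (f + psiOp (2 * τ) (cconj f))

/-- The additional-regularity exponent `p(r)` (with parameter `ε` standing for `+`). -/
def preg (ε r : ℝ) : ℝ :=
  if r = 1 then 1
  else if r ≤ 7/6 then 3 - 2*r + ε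
  else if r ≤ 17/12 then 2/3
  else if r ≤ 3/2 then 7/2 - 2*r + ε
  else if r < 5/2 then 5/4 - r/2
  else if r = 5/2 then ε
  else 0

/-- The additional-regularity exponent `q(r)` for `P₂`. -/
def qreg (r : ℝ) : ℝ := if r ≤ 5/2 then 5/4 - r/2 else 0

/-!
On the Fourier side `(g · J f)^_k = ∑ⱼ ⟨j⟩ f̂ⱼ ĝ_{k-j}` with `⟨j⟩ = (1 + j²)^{1/2}`, so with
`αⱼ = ⟨j⟩^r |f̂ⱼ|` and `βⱼ = ⟨j⟩^r |ĝⱼ|` the claim is the weighted convolution inequality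
`∑ₖ (∑ⱼ K(k,j) αⱼ β_{k-j})² ≤ C ‖α‖² ‖β‖²` for `K(k,j) = ⟨k⟩^{r-1} ⟨j⟩^{1-r} ⟨k-j⟩^{-r}`.
By Cauchy–Schwarz in `j` it suffices that `∑ₖ K(k,j)²` is bounded uniformly in `j`, and this follows
from the pointwise bound `K(k,j)² ≲ ⟨k-j⟩^{-2r} + ⟨k⟩^{-2 min(r,1)}`, whose terms are summable
because `r > 1/2`: either `⟨k-j⟩` is small and then `⟨k⟩ ≈ ⟨j⟩`, or `⟨k-j⟩` dominates both.
-/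

open ENNReal AddCircle

section Fourier

variable {T : ℝ} [Fact (0 < T)]

theorem fourierCoeff_mul_tsum_fourier {g : AddCircle T → ℂ} (hg : Integrable g haarAddCircle)
    {m : ℤ → ℂ} (hm : Summable fun j => ‖m j‖) (k : ℤ) :
    fourierCoeff (fun x => g x * ∑' j, m j * fourier j x) k
      = ∑' j, m j * fourierCoeff g (k - j) := by
  have hterm : ∀ x j, fourier (-k) x * (g x * (m j * fourier j x))
      = m j * (fourier (-(k - j)) x * g x) := fun x j => by
    rw [show -(k - j) = -k + j by ring, fourier_add]; ring
  have hint : ∀ j, Integrable (fun x => m j * (fourier (-(k - j)) x * g x)) haarAddCircle :=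
    fun j => (hg.fourier_smul _).const_mul _
  have hnorm : ∀ j, ∫ x, ‖m j * (fourier (-(k - j)) x * g x)‖ ∂haarAddCircle
      = ‖m j‖ * ∫ x, ‖g x‖ ∂haarAddCircle := fun j => by
    rw [← integral_const_mul]
    simp [fourier_apply, Circle.norm_coe]
  simp only [fourierCoeff, smul_eq_mul, ← tsum_mul_left, hterm]
  rw [← integral_tsum_of_summable_integral_norm hint (by simpa only [hnorm] using hm.mul_right _)]
  simp only [integral_const_mul]

theorem fourierCoeff_tsum_fourier {c : ℤ → ℂ} (hc : Summable fun j => ‖c j‖) (k : ℤ) :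
    fourierCoeff (fun x : AddCircle T => ∑' j, c j * fourier j x) k = c k := by
  have hone : (fun _ : AddCircle T => (1 : ℂ)) = ⇑(fourier 0 : C(AddCircle T, ℂ)) :=
    funext fun _ => fourier_zero.symm
  have hmul := fourierCoeff_mul_tsum_fourier (integrable_const (μ := haarAddCircle (T := T)) 1) hc k
  simp only [one_mul] at hmul
  rw [hmul, hone, fourierCoeff_fourier, tsum_eq_single k]
  · simp
  · intro j hj; simp [sub_eq_zero, Ne.symm hj]

end Fourier

/-- With `x = 1 + k²`, `y = 1 + j²`, `z = 1 + (k - j)²` this is `K(k,j)² = convKernel r k j ^ 2`. -/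
def besselKernel (r x y z : ℝ) : ℝ := x ^ (r - 1) * y ^ (1 - r) * z ^ (-r)

theorem log_le_log_four_add_log {a b : ℝ} (ha : 0 < a) (hab : a ≤ 4 * b) :
    Real.log a ≤ Real.log 4 + Real.log b := by
  rw [← Real.log_mul (by norm_num) (by linarith)]
  exact Real.log_le_log ha hab

theorem besselKernel_le_of_comparable {r x y z : ℝ} (hx : 0 < x) (hy : 0 < y)
    (hz : 0 < z) (hxy : x ≤ 4 * y) (hyx : y ≤ 4 * x) :
    besselKernel r x y z ≤ 4 ^ |r - 1| * z ^ (-r) := by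
  have h1 := log_le_log_four_add_log hx hxy
  have h2 := log_le_log_four_add_log hy hyx
  have hratio : x ^ (r - 1) * y ^ (1 - r) ≤ 4 ^ |r - 1| := by
    rw [Real.rpow_def_of_pos hx, Real.rpow_def_of_pos hy, Real.rpow_def_of_pos (by norm_num),
      ← Real.exp_add, Real.exp_le_exp]
    rcases le_total 0 (r - 1) with hr | hr
    · rw [abs_of_nonneg hr]; nlinarith
    · rw [abs_of_nonpos hr]; nlinarith
  exact mul_le_mul_of_nonneg_right hratio (by positivity)

theorem besselKernel_le_of_dominated {r x y z : ℝ} (hr : 1 / 2 < r) (hx : 1 ≤ x) (hy : 1 ≤ y)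
    (hxz : x ≤ 4 * z) (hyz : y ≤ 4 * z) :
    besselKernel r x y z ≤ 4 ^ r * x ^ (-min r 1) := by
  have hz : 0 < z := by linarith
  have hlogx := log_le_log_four_add_log (by linarith) hxz
  have hlogy := log_le_log_four_add_log (by linarith) hyz
  have hy0 := Real.log_nonneg hy
  -- after taking logarithms the claim is linear in `log x`, `log y`, `log z`
  simp only [besselKernel, Real.rpow_def_of_pos (by linarith : (0 : ℝ) < x),
    Real.rpow_def_of_pos (by linarith : (0 : ℝ) < y), Real.rpow_def_of_pos hz,
    Real.rpow_def_of_pos (by norm_num : (0 : ℝ) < 4), ← Real.exp_add, Real.exp_le_exp]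
  rcases le_total r 1 with hr1 | hr1
  · rw [min_eq_left hr1]
    nlinarith [mul_nonneg (sub_nonneg.2 hr1) (sub_nonneg.2 hlogy),
      mul_nonneg (by linarith : (0 : ℝ) ≤ 2 * r - 1) (sub_nonneg.2 hlogx)]
  · rw [min_eq_right hr1]
    nlinarith [mul_nonneg (sub_nonneg.2 hr1) hy0,
      mul_nonneg (by linarith : (0 : ℝ) ≤ r) (sub_nonneg.2 hlogx)]

theorem besselKernel_le {r x y z : ℝ} (hr : 1 / 2 < r) (hx : 1 ≤ x) (hy : 1 ≤ y) (hz : 1 ≤ z)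
    (hxy : x ≤ 2 * y + 2 * z) (hyx : y ≤ 2 * x + 2 * z) :
    besselKernel r x y z ≤ 4 ^ |r - 1| * z ^ (-r) + 4 ^ r * x ^ (-min r 1) := by
  by_cases hfar : x ≤ 4 * z ∧ y ≤ 4 * z
  · exact le_add_of_nonneg_of_le (by positivity)
      (besselKernel_le_of_dominated hr hx hy hfar.1 hfar.2)
  · have hnear : x ≤ 4 * y ∧ y ≤ 4 * x := by
      rw [not_and_or, not_le, not_le] at hfar
      rcases hfar with h | h <;> constructor <;> linarith
    exact le_add_of_le_of_nonneg (besselKernel_le_of_comparable (by linarith)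
      (by linarith) (by linarith) hnear.1 hnear.2) (by positivity)

theorem summable_one_add_sq_rpow_neg {e : ℝ} (he : 1 / 2 < e) :
    Summable fun k : ℤ => (1 + (k : ℝ) ^ 2) ^ (-e) := by
  refine (Real.summable_abs_int_rpow (b := 2 * e) (by linarith)).of_norm_bounded_eventually ?_
  filter_upwards [(Set.finite_singleton (0 : ℤ)).compl_mem_cofinite] with k hk
  have hk0 : 0 < |(k : ℝ)| := by simpa using hk
  calc ‖(1 + (k : ℝ) ^ 2) ^ (-e)‖ = (1 + |(k : ℝ)| ^ 2) ^ (-e) := by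
        rw [sq_abs, Real.norm_of_nonneg (by positivity)]
    _ ≤ (|(k : ℝ)| ^ (2 : ℝ)) ^ (-e) := by
        rw [Real.rpow_two]
        exact Real.rpow_le_rpow_of_nonpos (by positivity) (by linarith) (by linarith)
    _ = |(k : ℝ)| ^ (-(2 * e)) := by rw [← Real.rpow_mul hk0.le]; ring_nf

theorem rpow_add_div_two_mul_le {x : ℝ} (hx : 0 < x) (a b c : ℝ) :
    x ^ ((a + b) / 2) * c ≤ (x ^ a + x ^ b * c ^ 2) / 2 := by
  have hsq : ∀ e : ℝ, (x ^ (e / 2)) ^ 2 = x ^ e := fun e => by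
    rw [← Real.rpow_mul_natCast hx.le]; norm_num
  have := two_mul_le_add_sq (x ^ (a / 2)) (x ^ (b / 2) * c)
  rw [mul_pow, hsq, hsq] at this
  rw [add_div, Real.rpow_add hx]
  linarith

theorem ENNReal.tsum_mul_sq_le {ι : Type*} (f g : ι → ℝ≥0∞) :
    (∑' i, f i * g i) ^ 2 ≤ (∑' i, f i ^ 2) * ∑' i, g i ^ 2 := by
  let _ : MeasurableSpace ι := ⊤
  have holder := ENNReal.lintegral_mul_le_Lp_mul_Lq Measure.count Real.HolderConjugate.two_two
    (f := f) (g := g) (by measurability) (by measurability)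
  simp only [lintegral_count, Pi.mul_apply] at holder
  calc (∑' i, f i * g i) ^ 2
      ≤ ((∑' i, f i ^ (2 : ℝ)) ^ (1 / 2 : ℝ) * (∑' i, g i ^ (2 : ℝ)) ^ (1 / 2 : ℝ)) ^ 2 := by
        gcongr
    _ = (∑' i, f i ^ 2) * ∑' i, g i ^ 2 := by
        rw [mul_pow, ← ENNReal.rpow_natCast, ← ENNReal.rpow_natCast (_ ^ _), ← ENNReal.rpow_mul,
          ← ENNReal.rpow_mul]
        norm_num

theorem tsum_sq_tsum_mul_sub_le {G : Type*} [AddGroup G] (K : G → G → ℝ≥0∞) {c : ℝ≥0∞}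
    (hK : ∀ j, ∑' k, K k j ^ 2 ≤ c) (α β : G → ℝ≥0∞) :
    ∑' k, (∑' j, K k j * α j * β (k - j)) ^ 2 ≤ c * (∑' j, α j ^ 2) * ∑' j, β j ^ 2 := by
  have hβ : ∀ k, ∑' j, β (k - j) ^ 2 = ∑' j, β j ^ 2 := fun k =>
    (Equiv.subLeft k).tsum_eq fun j => β j ^ 2
  calc ∑' k, (∑' j, K k j * α j * β (k - j)) ^ 2
      ≤ ∑' k, (∑' j, (K k j * α j) ^ 2) * ∑' j, β j ^ 2 := by
        gcongr with k
        rw [← hβ k]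
        exact ENNReal.tsum_mul_sq_le _ _
    _ = (∑' j, (∑' k, K k j ^ 2) * α j ^ 2) * ∑' j, β j ^ 2 := by
        simp only [mul_pow, ENNReal.tsum_mul_right]
        rw [ENNReal.tsum_comm]
        simp only [ENNReal.tsum_mul_right]
    _ ≤ (∑' j, c * α j ^ 2) * ∑' j, β j ^ 2 := by
        gcongr with j
        exact hK j
    _ = c * (∑' j, α j ^ 2) * ∑' j, β j ^ 2 := by rw [ENNReal.tsum_mul_left]

theorem summable_and_tsum_le_of_tsum_ofReal_le {ι : Type*} {u : ι → ℝ} (hu : ∀ i, 0 ≤ u i)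
    {M : ℝ} (hM : 0 ≤ M) (h : ∑' i, ENNReal.ofReal (u i) ≤ ENNReal.ofReal M) :
    Summable u ∧ ∑' i, u i ≤ M := by
  have hsum : Summable u := by
    simpa only [ENNReal.toReal_ofReal (hu _)] using
      ENNReal.summable_toReal (ne_top_of_le_ne_top ENNReal.ofReal_ne_top h)
  refine ⟨hsum, (ENNReal.ofReal_le_ofReal_iff hM).1 ?_⟩
  rwa [ENNReal.ofReal_tsum_of_nonneg hu hsum]

/-- `(1 + k²)^e = ⟨k⟩^{2e}`, taken in `ℝ≥0∞` so that sums need no summability side conditions. -/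
def bracketPow (e : ℝ) (k : ℤ) : ℝ≥0∞ := ENNReal.ofReal ((1 + (k : ℝ) ^ 2) ^ e)

theorem bracketPow_add (e e' : ℝ) (k : ℤ) :
    bracketPow (e + e') k = bracketPow e k * bracketPow e' k := by
  rw [bracketPow, Real.rpow_add (by positivity), ENNReal.ofReal_mul (by positivity)]
  rfl

theorem bracketPow_zero (k : ℤ) : bracketPow 0 k = 1 := by simp [bracketPow]

theorem bracketPow_sq (e : ℝ) (k : ℤ) : bracketPow e k ^ 2 = bracketPow (2 * e) k := by
  rw [sq, ← bracketPow_add, two_mul]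

theorem bracketPow_mul_ofReal_sq (e : ℝ) (k : ℤ) {x : ℝ} (hx : 0 ≤ x) :
    (bracketPow e k * ENNReal.ofReal x) ^ 2
      = ENNReal.ofReal ((1 + (k : ℝ) ^ 2) ^ (2 * e) * x ^ 2) := by
  rw [mul_pow, bracketPow_sq, ← ENNReal.ofReal_pow hx, bracketPow,
    ← ENNReal.ofReal_mul (by positivity)]

theorem tsum_bracketPow_neg_ne_top {e : ℝ} (he : 1 / 2 < e) : ∑' k, bracketPow (-e) k ≠ ⊤ := by
  unfold bracketPow
  rw [← ENNReal.ofReal_tsum_of_nonneg (fun k => by positivity) (summable_one_add_sq_rpow_neg he)]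
  exact ENNReal.ofReal_ne_top

def convKernel (r : ℝ) (k j : ℤ) : ℝ≥0∞ :=
  bracketPow ((r - 1) / 2) k * bracketPow ((1 - r) / 2) j * bracketPow (-r / 2) (k - j)

theorem convKernel_sq_le {r : ℝ} (hr : 1 / 2 < r) (k j : ℤ) :
    convKernel r k j ^ 2
      ≤ ENNReal.ofReal (4 ^ |r - 1|) * bracketPow (-r) (k - j)
        + ENNReal.ofReal (4 ^ r) * bracketPow (-min r 1) k := by
  have hsq : convKernel r k j ^ 2 = ENNReal.ofReal (besselKernel r (1 + (k : ℝ) ^ 2)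
      (1 + (j : ℝ) ^ 2) (1 + ((k - j : ℤ) : ℝ) ^ 2)) := by
    rw [convKernel, mul_pow, mul_pow, bracketPow_sq, bracketPow_sq, bracketPow_sq]
    simp only [bracketPow, besselKernel]
    rw [← ENNReal.ofReal_mul (by positivity), ← ENNReal.ofReal_mul (by positivity)]
    ring_nf
  rw [hsq, bracketPow, bracketPow, ← ENNReal.ofReal_mul (by positivity),
    ← ENNReal.ofReal_mul (by positivity), ← ENNReal.ofReal_add (by positivity) (by positivity)]
  refine ENNReal.ofReal_le_ofReal (besselKernel_le hr ?_ ?_ ?_ ?_ ?_) <;> push_cast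
  · nlinarith [sq_nonneg (k : ℝ)]
  · nlinarith [sq_nonneg (j : ℝ)]
  · nlinarith [sq_nonneg ((k : ℝ) - j)]
  · nlinarith [sq_nonneg ((k : ℝ) - 2 * j)]
  · nlinarith [sq_nonneg (2 * (k : ℝ) - j)]

theorem tsum_convKernel_sq_le {r : ℝ} (hr : 1 / 2 < r) (j : ℤ) :
    ∑' k, convKernel r k j ^ 2
      ≤ ENNReal.ofReal (4 ^ |r - 1|) * ∑' k, bracketPow (-r) k
        + ENNReal.ofReal (4 ^ r) * ∑' k, bracketPow (-min r 1) k := by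
  calc ∑' k, convKernel r k j ^ 2
      ≤ ∑' k, (ENNReal.ofReal (4 ^ |r - 1|) * bracketPow (-r) (k - j)
          + ENNReal.ofReal (4 ^ r) * bracketPow (-min r 1) k) :=
        ENNReal.tsum_le_tsum (convKernel_sq_le hr · j)
    _ = _ := by
        rw [ENNReal.tsum_add, ENNReal.tsum_mul_left, ENNReal.tsum_mul_left]
        congr 2
        exact (Equiv.subRight j).tsum_eq (bracketPow (-r))

theorem exists_tsum_sq_bracketPow_mul_conv_le {r : ℝ} (hr : 1 / 2 < r) :
    ∃ C > (0 : ℝ), ∀ A B : ℤ → ℝ≥0∞,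
      ∑' k, (bracketPow ((r - 1) / 2) k * ∑' j, bracketPow (1 / 2) j * A j * B (k - j)) ^ 2
        ≤ ENNReal.ofReal C * (∑' k, (bracketPow (r / 2) k * A k) ^ 2)
          * ∑' k, (bracketPow (r / 2) k * B k) ^ 2 := by
  set c := ENNReal.ofReal (4 ^ |r - 1|) * ∑' k, bracketPow (-r) k
    + ENNReal.ofReal (4 ^ r) * ∑' k, bracketPow (-min r 1) k
  have hc : c ≠ ⊤ := by
    have hmin : 1 / 2 < min r 1 := lt_min hr (by norm_num)
    simp only [c, ne_eq, ENNReal.add_eq_top, ENNReal.mul_eq_top, ENNReal.ofReal_ne_top,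
      tsum_bracketPow_neg_ne_top hr, tsum_bracketPow_neg_ne_top hmin]
    simp
  refine ⟨c.toReal + 1, by positivity, fun A B => ?_⟩
  have hsplit : ∀ k j, bracketPow ((r - 1) / 2) k * (bracketPow (1 / 2) j * A j * B (k - j))
      = convKernel r k j * (bracketPow (r / 2) j * A j)
        * (bracketPow (r / 2) (k - j) * B (k - j)) := by
    intro k j
    have hhalf : bracketPow (1 / 2) j = bracketPow ((1 - r) / 2) j * bracketPow (r / 2) j := by
      rw [← bracketPow_add]; ring_nf
    have hcancel : bracketPow (-r / 2) (k - j) * bracketPow (r / 2) (k - j) = 1 := by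
      rw [← bracketPow_add, neg_div, neg_add_cancel, bracketPow_zero]
    calc _ = bracketPow ((r - 1) / 2) k * bracketPow ((1 - r) / 2) j * bracketPow (r / 2) j * A j
          * (bracketPow (-r / 2) (k - j) * bracketPow (r / 2) (k - j)) * B (k - j) := by
          rw [hhalf, hcancel]; ring
      _ = _ := by rw [convKernel]; ring
  calc _ = ∑' k, (∑' j, convKernel r k j * (bracketPow (r / 2) j * A j)
          * (bracketPow (r / 2) (k - j) * B (k - j))) ^ 2 := by
        simp only [← ENNReal.tsum_mul_left, hsplit]
    _ ≤ c * (∑' k, (bracketPow (r / 2) k * A k) ^ 2) * ∑' k, (bracketPow (r / 2) k * B k) ^ 2 :=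
        tsum_sq_tsum_mul_sub_le _ (tsum_convKernel_sq_le hr) (fun k => bracketPow (r / 2) k * A k)
          (fun k => bracketPow (r / 2) k * B k)
    _ ≤ _ := by
        gcongr
        rw [ENNReal.ofReal_add ENNReal.toReal_nonneg zero_le_one, ENNReal.ofReal_toReal hc]
        exact le_self_add

theorem fc_zero (k : ℤ) : fc 0 k = 0 := by simp [fc, fourierCoeff]

theorem mulOp_zero (m : ℤ → ℂ) : mulOp m 0 = 0 := by
  funext x; simp [mulOp, fc_zero]

theorem sNormSq_zero (α : ℝ) : sNormSq α 0 = 0 := by simp [sNormSq, fc_zero]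

theorem sNormSq_nonneg (α : ℝ) (f : 𝕋 → ℂ) : 0 ≤ sNormSq α f :=
  tsum_nonneg fun k => by positivity

theorem fc_mulOp {m : ℤ → ℂ} {f : 𝕋 → ℂ} (h : Summable fun k => ‖m k * fc f k‖) (k : ℤ) :
    fc (mulOp m f) k = m k * fc f k :=
  fourierCoeff_tsum_fourier h k

theorem mulOp_eq_zero_of_not_summable {m : ℤ → ℂ} {f : 𝕋 → ℂ}
    (h : ¬Summable fun k => ‖m k * fc f k‖) : mulOp m f = 0 := by
  funext x
  refine tsum_eq_zero_of_not_summable fun hx => h ?_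
  refine (summable_norm_iff.2 hx).congr fun k => ?_
  rw [norm_mul, fourier_apply, Circle.norm_coe, mul_one]

theorem fc_mul_mulOp {g : 𝕋 → ℂ} (hg : MemLp g 2 volume) {m : ℤ → ℂ} {f : 𝕋 → ℂ}
    (h : Summable fun k => ‖m k * fc f k‖) (k : ℤ) :
    fc (g * mulOp m f) k = ∑' j, m j * fc f j * fc g (k - j) :=
  fourierCoeff_mul_tsum_fourier (hg.haarAddCircle.integrable one_le_two) h k

theorem norm_ofReal_rpow_mul (e : ℝ) (k : ℤ) (z : ℂ) :
    ‖(((1 + (k : ℝ) ^ 2) ^ e : ℝ) : ℂ) * z‖ = (1 + (k : ℝ) ^ 2) ^ e * ‖z‖ := by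
  rw [norm_mul, Complex.norm_real, Real.norm_of_nonneg (by positivity)]

theorem ofReal_sNormSq {α : ℝ} {f : 𝕋 → ℂ}
    (hf : Summable fun k : ℤ => (1 + (k : ℝ) ^ 2) ^ α * ‖fc f k‖ ^ 2) :
    ENNReal.ofReal (sNormSq α f) = ∑' k, (bracketPow (α / 2) k * ‖fc f k‖ₑ) ^ 2 := by
  rw [sNormSq, ENNReal.ofReal_tsum_of_nonneg (fun k => by positivity) hf]
  congr 1 with k
  rw [← ofReal_norm, bracketPow_mul_ofReal_sq _ _ (norm_nonneg _), mul_div_cancel₀ _ two_ne_zero]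

theorem sNormSq_Jop_neg_one {r : ℝ} (hr : 1 / 2 < r) {h : 𝕋 → ℂ}
    (hu : Summable fun k : ℤ => (1 + (k : ℝ) ^ 2) ^ (r - 1) * ‖fc h k‖ ^ 2) :
    sNormSq r (Jop (-1) h) = ∑' k : ℤ, (1 + (k : ℝ) ^ 2) ^ (r - 1) * ‖fc h k‖ ^ 2 := by
  have hsum : Summable fun k : ℤ => ‖(((1 + (k : ℝ) ^ 2) ^ (-1 / 2 : ℝ) : ℝ) : ℂ) * fc h k‖ := by
    refine Summable.of_nonneg_of_le (fun k => norm_nonneg _) (fun k => ?_)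
      (((summable_one_add_sq_rpow_neg hr).add hu).div_const 2)
    rw [norm_ofReal_rpow_mul, show (-1 / 2 : ℝ) = (-r + (r - 1)) / 2 by ring]
    exact rpow_add_div_two_mul_le (by positivity) _ _ _
  refine tsum_congr fun k => ?_
  rw [Jop, fc_mulOp hsum, norm_ofReal_rpow_mul, mul_pow, ← Real.rpow_mul_natCast (by positivity),
    ← mul_assoc, ← Real.rpow_add (by positivity)]
  ring_nf

theorem enorm_fc_mul_Jop_one_le {f g : 𝕋 → ℂ} (hg : MemLp g 2 volume)
    (hs : Summable fun k : ℤ => ‖(((1 + (k : ℝ) ^ 2) ^ (1 / 2 : ℝ) : ℝ) : ℂ) * fc f k‖) (k : ℤ) :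
    ‖fc (g * Jop 1 f) k‖ₑ ≤ ∑' j, bracketPow (1 / 2) j * ‖fc f j‖ₑ * ‖fc g (k - j)‖ₑ := by
  rw [Jop, fc_mul_mulOp hg hs]
  refine enorm_tsum_le_tsum_enorm.trans_eq (tsum_congr fun j => ?_)
  rw [enorm_mul, enorm_mul, ← ofReal_norm, Complex.norm_real, Real.norm_of_nonneg (by positivity)]
  rfl

theorem exists_sNormSq_Jop_neg_one_mul_Jop_one_le {r : ℝ} (hr : 1 / 2 < r) :
    ∃ C > (0 : ℝ), ∀ f g : 𝕋 → ℂ, MemH r f → MemH r g →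
      sNormSq r (Jop (-1) (g * Jop 1 f)) ≤ C * sNormSq r f * sNormSq r g := by
  obtain ⟨C, hC, hconv⟩ := exists_tsum_sq_bracketPow_mul_conv_le hr
  refine ⟨C, hC, fun f g hf hg => ?_⟩
  have hbound : 0 ≤ C * sNormSq r f * sNormSq r g := by
    have := sNormSq_nonneg r f; have := sNormSq_nonneg r g; positivity
  by_cases hs : Summable fun k : ℤ => ‖(((1 + (k : ℝ) ^ 2) ^ (1 / 2 : ℝ) : ℝ) : ℂ) * fc f k‖
  · set h := g * Jop 1 f
    have hest : ∑' k : ℤ, ENNReal.ofReal ((1 + (k : ℝ) ^ 2) ^ (r - 1) * ‖fc h k‖ ^ 2)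
        ≤ ENNReal.ofReal (C * sNormSq r f * sNormSq r g) := by
      calc _ = ∑' k, (bracketPow ((r - 1) / 2) k * ‖fc h k‖ₑ) ^ 2 := by
            congr 1 with k
            rw [← ofReal_norm, bracketPow_mul_ofReal_sq _ _ (norm_nonneg _),
              mul_div_cancel₀ _ two_ne_zero]
        _ ≤ ∑' k, (bracketPow ((r - 1) / 2) k
              * ∑' j, bracketPow (1 / 2) j * ‖fc f j‖ₑ * ‖fc g (k - j)‖ₑ) ^ 2 := by
            gcongr with k
            exact enorm_fc_mul_Jop_one_le hg.1 hs k
        _ ≤ ENNReal.ofReal C * (∑' k, (bracketPow (r / 2) k * ‖fc f k‖ₑ) ^ 2)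
              * ∑' k, (bracketPow (r / 2) k * ‖fc g k‖ₑ) ^ 2 :=
            hconv (fun j => ‖fc f j‖ₑ) (fun j => ‖fc g j‖ₑ)
        _ = _ := by
            rw [← ofReal_sNormSq hf.2, ← ofReal_sNormSq hg.2, ← ENNReal.ofReal_mul hC.le,
              ← ENNReal.ofReal_mul (by have := sNormSq_nonneg r f; positivity)]
    obtain ⟨hu, hle⟩ := summable_and_tsum_le_of_tsum_ofReal_le (fun k => by positivity) hbound hest
    rwa [sNormSq_Jop_neg_one hr hu]
  · -- `Jop 1 f` is a `tsum`, hence the junk value `0` when the series of `J f` is not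
    -- absolutely convergent.
    have hJf : Jop 1 f = 0 := mulOp_eq_zero_of_not_summable hs
    rwa [hJf, mul_zero, Jop, mulOp_zero, sNormSq_zero]

theorem stmt8 (r : ℝ) (hr : 1/2 < r) :
    ∃ C > (0:ℝ), ∀ f g : 𝕋 → ℂ, MemH r f → MemH r g →
      sNorm r (Jop (-1) (g * Jop 1 f)) ≤ C * sNorm r f * sNorm r g := by
  obtain ⟨C, hC, hsq⟩ := exists_sNormSq_Jop_neg_one_mul_Jop_one_le hr
  refine ⟨Real.sqrt C, Real.sqrt_pos.2 hC, fun f g hf hg => ?_⟩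
  calc sNorm r (Jop (-1) (g * Jop 1 f))
      ≤ Real.sqrt (C * sNormSq r f * sNormSq r g) := Real.sqrt_le_sqrt (hsq f g hf hg)
    _ = Real.sqrt C * sNorm r f * sNorm r g := by
        rw [Real.sqrt_mul (by have := sNormSq_nonneg r f; positivity), Real.sqrt_mul hC.le, sNorm,
          sNorm]
end
end

section
/- Let r ≥ 1. There exists C = C(r) > 0 such that for all τ > 0 and all f ∈ H^{r+1}(𝕋): ‖P₁^τ(f)‖_r ≤ C τ² ‖f‖_{r+1}². -/
open MeasureTheory Complex

noncomputable section

local notation "𝕋" => AddCircle (2 * Real.pi)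

/-!
Write `⟨k⟩ = (1 + k²)^{1/2}`. Bounding `|e^{ix} - 1| ≤ min (|x|, 2)` in both factors of the
integrand, the symbol of `P₁^τ` is at most `4τ² (k₁²/k²) min ((k - k₁)², |k k₁|)`. Peetre's
inequality `⟨k⟩² ≤ 2 ⟨k₁⟩² ⟨k - k₁⟩²` and `min ((k - k₁)², |k k₁|) ≤ 2 |k| ⟨k - k₁⟩` turn this
into `⟨k⟩^r |symbol| ≲ τ² ⟨k₁⟩^{r+1} ⟨k - k₁⟩^r`. Hence `⟨k⟩^r |P₁^τ(f)^_k|` is dominated by the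
convolution of `⟨·⟩^{r+1} |f̂| ∈ ℓ²` with `⟨·⟩^r |f̂|`, which lies in `ℓ¹` by Cauchy–Schwarz since
`∑ ⟨j⟩⁻² < ∞`, and Young's inequality `ℓ² * ℓ¹ → ℓ²` concludes.
-/

section SequenceInequalities

variable {ι : Type*}

theorem summable_mul_and_tsum_mul_le_sqrt_mul_sqrt {u v : ι → ℝ} (hu : ∀ i, 0 ≤ u i)
    (hv : ∀ i, 0 ≤ v i) (hu2 : Summable fun i => u i ^ 2) (hv2 : Summable fun i => v i ^ 2) :
    (Summable fun i => u i * v i) ∧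
      ∑' i, u i * v i ≤ √(∑' i, u i ^ 2) * √(∑' i, v i ^ 2) := by
  have h := Real.summable_and_inner_le_Lp_mul_Lq_tsum_of_nonneg .two_two hu hv
    (by simpa using hu2) (by simpa using hv2)
  simpa [Real.sqrt_eq_rpow] using h

theorem summable_mul_and_sq_tsum_mul_le {b g : ι → ℝ} (hb : ∀ i, 0 ≤ b i) (hg : ∀ i, 0 ≤ g i)
    (hbg : Summable fun i => b i ^ 2 * g i) (hg1 : Summable g) :
    (Summable fun i => b i * g i) ∧
      (∑' i, b i * g i) ^ 2 ≤ (∑' i, b i ^ 2 * g i) * ∑' i, g i := by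
  have hsq : ∀ i, (b i * √(g i)) ^ 2 = b i ^ 2 * g i := fun i => by
    rw [mul_pow, Real.sq_sqrt (hg i)]
  have hfac : ∀ i, b i * √(g i) * √(g i) = b i * g i := fun i => by
    rw [mul_assoc, Real.mul_self_sqrt (hg i)]
  obtain ⟨hsum, hle⟩ := summable_mul_and_tsum_mul_le_sqrt_mul_sqrt
    (fun i => mul_nonneg (hb i) (Real.sqrt_nonneg _)) (fun i => Real.sqrt_nonneg _)
    (hbg.congr fun i => (hsq i).symm) (hg1.congr fun i => (Real.sq_sqrt (hg i)).symm)
  simp only [hsq, hfac, Real.sq_sqrt (hg _)] at hsum hle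
  refine ⟨hsum, ?_⟩
  calc (∑' i, b i * g i) ^ 2
      ≤ (√(∑' i, b i ^ 2 * g i) * √(∑' i, g i)) ^ 2 :=
        pow_le_pow_left₀ (tsum_nonneg fun i => mul_nonneg (hb i) (hg i)) hle 2
    _ = (∑' i, b i ^ 2 * g i) * ∑' i, g i := by
        rw [mul_pow, Real.sq_sqrt (tsum_nonneg fun i => mul_nonneg (sq_nonneg _) (hg i)),
          Real.sq_sqrt (tsum_nonneg hg)]

end SequenceInequalities

section Convolution

variable {G : Type*} [AddCommGroup G] {b g : G → ℝ}

theorem summable_mul_comp_sub (hb : ∀ j, 0 ≤ b j) (hg : ∀ j, 0 ≤ g j)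
    (hb2 : Summable fun j => b j ^ 2) (hg1 : Summable g) (k : G) :
    Summable fun j => b j * g (k - j) := by
  have hbound : ∀ j, b j ≤ ∑' i, b i ^ 2 + 1 := fun j => by
    nlinarith [hb2.le_tsum j fun i _ => sq_nonneg (b i), sq_nonneg (b j - 1)]
  refine Summable.of_nonneg_of_le (fun j => mul_nonneg (hb j) (hg _))
    (fun j => mul_le_mul_of_nonneg_right (hbound j) (hg _)) ?_
  exact ((Equiv.subLeft k).summable_iff.mpr hg1).mul_left _

/-- Young's inequality `‖b * g‖₂ ≤ ‖g‖₁ ‖b‖₂` for nonnegative sequences. -/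
theorem summable_and_tsum_sq_tsum_mul_comp_sub_le (hb : ∀ j, 0 ≤ b j) (hg : ∀ j, 0 ≤ g j)
    (hb2 : Summable fun j => b j ^ 2) (hg1 : Summable g) :
    (Summable fun k => (∑' j, b j * g (k - j)) ^ 2) ∧
      ∑' k, (∑' j, b j * g (k - j)) ^ 2 ≤ (∑' j, g j) ^ 2 * ∑' j, b j ^ 2 := by
  have hrow : ∀ j, ∑' k, b j ^ 2 * g (k - j) = b j ^ 2 * ∑' i, g i := fun j => by
    rw [tsum_mul_left]; congr 1; exact (Equiv.subRight j).tsum_eq g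
  have hQ : Summable fun p : G × G => b p.1 ^ 2 * g (p.2 - p.1) := by
    rw [summable_prod_of_nonneg (fun p => mul_nonneg (sq_nonneg (b p.1)) (hg _))]
    refine ⟨fun j => ?_, ?_⟩
    · exact ((Equiv.subRight j).summable_iff.mpr hg1).mul_left (b j ^ 2)
    · simp only [hrow]
      exact hb2.mul_right _
  have hH : Summable fun k => ∑' j, b j ^ 2 * g (k - j) := hQ.prod_symm.prod
  have hHsum : ∑' k, ∑' j, b j ^ 2 * g (k - j) = (∑' i, g i) * ∑' j, b j ^ 2 := by
    rw [Summable.tsum_comm (f := fun j k => b j ^ 2 * g (k - j)) hQ, tsum_congr hrow,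
      tsum_mul_right, mul_comm]
  have hpoint : ∀ k, (∑' j, b j * g (k - j)) ^ 2 ≤ (∑' j, b j ^ 2 * g (k - j)) * ∑' i, g i :=
    fun k => by
      have h := (summable_mul_and_sq_tsum_mul_le hb (fun j => hg (k - j))
        (hQ.prod_symm.prod_factor k) ((Equiv.subLeft k).summable_iff.mpr hg1)).2
      rwa [show ∑' j, g (k - j) = ∑' i, g i from (Equiv.subLeft k).tsum_eq g] at h
  have hF : Summable fun k => (∑' j, b j * g (k - j)) ^ 2 :=
    Summable.of_nonneg_of_le (fun k => sq_nonneg _) hpoint (hH.mul_right _)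
  refine ⟨hF, ?_⟩
  calc ∑' k, (∑' j, b j * g (k - j)) ^ 2
      ≤ ∑' k, (∑' j, b j ^ 2 * g (k - j)) * ∑' i, g i :=
        hF.tsum_le_tsum hpoint (hH.mul_right _)
    _ = (∑' j, g j) ^ 2 * ∑' j, b j ^ 2 := by rw [tsum_mul_right, hHsum]; ring

end Convolution

def weightedNorm (s : ℝ) (u : ℤ → ℂ) (j : ℤ) : ℝ := (1 + (j : ℝ) ^ 2) ^ (s / 2) * ‖u j‖

theorem weightedNorm_nonneg (s : ℝ) (u : ℤ → ℂ) (j : ℤ) : 0 ≤ weightedNorm s u j := by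
  unfold weightedNorm; positivity

theorem sq_weightedNorm (s : ℝ) (u : ℤ → ℂ) (j : ℤ) :
    weightedNorm s u j ^ 2 = (1 + (j : ℝ) ^ 2) ^ s * ‖u j‖ ^ 2 := by
  rw [weightedNorm, mul_pow, ← Real.rpow_natCast, ← Real.rpow_mul (by positivity)]
  norm_num

theorem seqNormSq_eq_tsum_sq_weightedNorm (s : ℝ) (u : ℤ → ℂ) :
    seqNormSq s u = ∑' j, weightedNorm s u j ^ 2 := by
  simp only [seqNormSq, sq_weightedNorm]

theorem summable_inv_one_add_sq : Summable fun j : ℤ => (1 + (j : ℝ) ^ 2)⁻¹ := by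
  -- compare with `1 / |j + 1/2| ^ 2`, which has no pole on `ℤ`
  have h := (Real.summable_one_div_int_add_rpow (1 / 2) 2).mpr one_lt_two
  refine Summable.of_nonneg_of_le (fun j => by positivity) (fun j => ?_) (h.mul_left 2)
  have hpos : 0 < ((j : ℝ) + 1 / 2) ^ 2 := by
    have : (j : ℝ) + 1 / 2 ≠ 0 := by
      intro h0
      have : (2 * j + 1 : ℤ) = 0 := by exact_mod_cast (by linarith : (2 * j + 1 : ℝ) = 0)
      omega
    positivity
  rw [Real.rpow_two, sq_abs, ← div_eq_mul_one_div, inv_eq_one_div,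
    div_le_div_iff₀ (by positivity) hpos]
  nlinarith [sq_nonneg ((j : ℝ) - 1 / 2)]

theorem summable_and_tsum_weightedNorm_le (s : ℝ) {v : ℤ → ℂ}
    (hv : Summable fun j : ℤ => (1 + (j : ℝ) ^ 2) ^ (s + 1) * ‖v j‖ ^ 2) :
    (Summable fun j => weightedNorm s v j) ∧
      ∑' j, weightedNorm s v j ≤ √(∑' j : ℤ, (1 + (j : ℝ) ^ 2)⁻¹) * seqNorm (s + 1) v := by
  have hw : ∀ j : ℤ, 0 < 1 + (j : ℝ) ^ 2 := fun j => by positivity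
  have hfac : ∀ j : ℤ, (√(1 + (j : ℝ) ^ 2))⁻¹ * weightedNorm (s + 1) v j = weightedNorm s v j :=
    fun j => by
      rw [weightedNorm, weightedNorm, ← mul_assoc, Real.sqrt_eq_rpow, ← Real.rpow_neg (hw j).le,
        ← Real.rpow_add (hw j)]
      ring_nf
  have hinv : ∀ j : ℤ, (√(1 + (j : ℝ) ^ 2))⁻¹ ^ 2 = (1 + (j : ℝ) ^ 2)⁻¹ := fun j => by
    rw [inv_pow, Real.sq_sqrt (hw j).le]
  obtain ⟨hsum, hle⟩ := summable_mul_and_tsum_mul_le_sqrt_mul_sqrt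
    (fun j => inv_nonneg.mpr (Real.sqrt_nonneg _)) (weightedNorm_nonneg (s + 1) v)
    (summable_inv_one_add_sq.congr fun j => (hinv j).symm)
    (hv.congr fun j => (sq_weightedNorm _ _ j).symm)
  simp only [hfac, hinv] at hsum hle
  rw [seqNorm, seqNormSq_eq_tsum_sq_weightedNorm]
  exact ⟨hsum, hle⟩

def bilinearMultiplier (σ : ℤ → ℤ → ℂ) (u v : ℤ → ℂ) (k : ℤ) : ℂ :=
  ∑' k₁, σ k k₁ * u k₁ * v (k - k₁)

section BilinearEstimate

variable {r M : ℝ} {σ : ℤ → ℤ → ℂ}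

theorem weightedNorm_bilinearMultiplier_le
    (hσ : ∀ k k₁ : ℤ, (1 + (k : ℝ) ^ 2) ^ (r / 2) * ‖σ k k₁‖
      ≤ M * ((1 + (k₁ : ℝ) ^ 2) ^ ((r + 1) / 2) * (1 + ((k - k₁ : ℤ) : ℝ) ^ 2) ^ (r / 2)))
    (u v : ℤ → ℂ) (k : ℤ)
    (hsum : Summable fun k₁ => weightedNorm (r + 1) u k₁ * weightedNorm r v (k - k₁)) :
    weightedNorm r (bilinearMultiplier σ u v) k
      ≤ M * ∑' k₁, weightedNorm (r + 1) u k₁ * weightedNorm r v (k - k₁) := by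
  set w : ℝ := (1 + (k : ℝ) ^ 2) ^ (r / 2)
  have hw : 0 ≤ w := by positivity
  have hterm : ∀ k₁, ‖(w : ℂ) * (σ k k₁ * u k₁ * v (k - k₁))‖
      ≤ M * (weightedNorm (r + 1) u k₁ * weightedNorm r v (k - k₁)) := fun k₁ => by
    rw [norm_mul, norm_mul, norm_mul, Complex.norm_of_nonneg hw]
    calc w * (‖σ k k₁‖ * ‖u k₁‖ * ‖v (k - k₁)‖) = w * ‖σ k k₁‖ * (‖u k₁‖ * ‖v (k - k₁)‖) := by
          ring
      _ ≤ M * ((1 + (k₁ : ℝ) ^ 2) ^ ((r + 1) / 2) * (1 + ((k - k₁ : ℤ) : ℝ) ^ 2) ^ (r / 2))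
            * (‖u k₁‖ * ‖v (k - k₁)‖) :=
            mul_le_mul_of_nonneg_right (hσ k k₁) (by positivity)
      _ = _ := by simp only [weightedNorm]; ring
  calc weightedNorm r (bilinearMultiplier σ u v) k
      = ‖∑' k₁, (w : ℂ) * (σ k k₁ * u k₁ * v (k - k₁))‖ := by
        rw [tsum_mul_left, norm_mul, Complex.norm_of_nonneg hw]; rfl
    _ ≤ ∑' k₁, M * (weightedNorm (r + 1) u k₁ * weightedNorm r v (k - k₁)) :=
        tsum_of_norm_bounded (hsum.mul_left M).hasSum hterm
    _ = _ := tsum_mul_left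

theorem seqNorm_bilinearMultiplier_le (hM : 0 ≤ M)
    (hσ : ∀ k k₁ : ℤ, (1 + (k : ℝ) ^ 2) ^ (r / 2) * ‖σ k k₁‖
      ≤ M * ((1 + (k₁ : ℝ) ^ 2) ^ ((r + 1) / 2) * (1 + ((k - k₁ : ℤ) : ℝ) ^ 2) ^ (r / 2)))
    {u v : ℤ → ℂ} (hu : Summable fun j : ℤ => (1 + (j : ℝ) ^ 2) ^ (r + 1) * ‖u j‖ ^ 2)
    (hv : Summable fun j : ℤ => (1 + (j : ℝ) ^ 2) ^ (r + 1) * ‖v j‖ ^ 2) :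
    seqNorm r (bilinearMultiplier σ u v)
      ≤ M * √(∑' j : ℤ, (1 + (j : ℝ) ^ 2)⁻¹) * seqNorm (r + 1) u * seqNorm (r + 1) v := by
  set b := weightedNorm (r + 1) u
  set g := weightedNorm r v
  set conv := fun k => ∑' k₁, b k₁ * g (k - k₁)
  have hb2 : Summable fun j => b j ^ 2 := hu.congr fun j => (sq_weightedNorm _ _ j).symm
  obtain ⟨hg1, hgle⟩ := summable_and_tsum_weightedNorm_le r hv
  obtain ⟨hconv2, hyoung⟩ := summable_and_tsum_sq_tsum_mul_comp_sub_le
    (weightedNorm_nonneg _ u) (weightedNorm_nonneg _ v) hb2 hg1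
  have hpoint : ∀ k, weightedNorm r (bilinearMultiplier σ u v) k ^ 2 ≤ M ^ 2 * conv k ^ 2 :=
    fun k => by
      rw [← mul_pow]
      exact pow_le_pow_left₀ (weightedNorm_nonneg _ _ k)
        (weightedNorm_bilinearMultiplier_le hσ u v k (summable_mul_comp_sub
          (weightedNorm_nonneg _ u) (weightedNorm_nonneg _ v) hb2 hg1 k)) 2
  have hsq : seqNormSq r (bilinearMultiplier σ u v)
      ≤ (M * √(∑' j : ℤ, (1 + (j : ℝ) ^ 2)⁻¹) * seqNorm (r + 1) u * seqNorm (r + 1) v) ^ 2 := by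
    rw [seqNormSq_eq_tsum_sq_weightedNorm]
    calc ∑' k, weightedNorm r (bilinearMultiplier σ u v) k ^ 2
        ≤ ∑' k, M ^ 2 * conv k ^ 2 :=
          Summable.tsum_le_tsum hpoint
            (Summable.of_nonneg_of_le (fun k => sq_nonneg _) hpoint (hconv2.mul_left _))
            (hconv2.mul_left _)
      _ ≤ M ^ 2 * ((∑' j, g j) ^ 2 * ∑' j, b j ^ 2) := by
          rw [tsum_mul_left]; exact mul_le_mul_of_nonneg_left hyoung (sq_nonneg M)
      _ ≤ M ^ 2 * ((√(∑' j : ℤ, (1 + (j : ℝ) ^ 2)⁻¹) * seqNorm (r + 1) v) ^ 2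
            * seqNorm (r + 1) u ^ 2) := by
          have hu2 : seqNorm (r + 1) u ^ 2 = ∑' j, b j ^ 2 := by
            rw [seqNorm, seqNormSq_eq_tsum_sq_weightedNorm,
              Real.sq_sqrt (tsum_nonneg fun j => sq_nonneg _)]
          rw [hu2]
          exact mul_le_mul_of_nonneg_left (mul_le_mul_of_nonneg_right
            (pow_le_pow_left₀ (tsum_nonneg (weightedNorm_nonneg _ v)) hgle 2)
            (tsum_nonneg fun j => sq_nonneg _)) (sq_nonneg M)
      _ = _ := by ring
  refine (Real.sqrt_le_sqrt hsq).trans_eq (Real.sqrt_sq ?_)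
  exact mul_nonneg (mul_nonneg (mul_nonneg hM (Real.sqrt_nonneg _)) (Real.sqrt_nonneg _))
    (Real.sqrt_nonneg _)

end BilinearEstimate

open ComplexConjugate

theorem fourierCoeff_conj {T : ℝ} [Fact (0 < T)] (f : AddCircle T → ℂ) (n : ℤ) :
    fourierCoeff (fun x => conj (f x)) n = conj (fourierCoeff f (-n)) := by
  rw [fourierCoeff, fourierCoeff, ← integral_conj]
  congr 1
  ext x
  simp only [smul_eq_mul, map_mul, fourier_neg, neg_neg]

theorem fc_cconj (f : 𝕋 → ℂ) (k : ℤ) : fc (cconj f) k = conj (fc f (-k)) :=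
  fourierCoeff_conj f k

theorem weight_mul_sq_norm_fc_cconj (α : ℝ) (f : 𝕋 → ℂ) :
    (fun k : ℤ => (1 + (k : ℝ) ^ 2) ^ α * ‖fc (cconj f) k‖ ^ 2)
      = (fun k : ℤ => (1 + (k : ℝ) ^ 2) ^ α * ‖fc f k‖ ^ 2) ∘ Equiv.neg ℤ := by
  ext k
  simp [fc_cconj]

theorem MemH.summable_fc_cconj {α : ℝ} {f : 𝕋 → ℂ} (hf : MemH α f) :
    Summable fun k : ℤ => (1 + (k : ℝ) ^ 2) ^ α * ‖fc (cconj f) k‖ ^ 2 := by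
  rw [weight_mul_sq_norm_fc_cconj]
  exact (Equiv.neg ℤ).summable_iff.mpr hf.2

theorem seqNorm_fc_cconj (α : ℝ) (f : 𝕋 → ℂ) : seqNorm α (fc (cconj f)) = sNorm α f := by
  rw [seqNorm, seqNormSq, weight_mul_sq_norm_fc_cconj]
  exact congrArg Real.sqrt ((Equiv.neg ℤ).tsum_eq fun k : ℤ => (1 + (k : ℝ) ^ 2) ^ α * ‖fc f k‖ ^ 2)

theorem norm_exp_neg_two_I_mul_sub_one_le (s x : ℝ) :
    ‖exp (-(2 * I * s * x)) - 1‖ ≤ min (2 * |s| * |x|) 2 := by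
  have hrot : -(2 * I * s * x) = I * ((-(2 * s * x) : ℝ) : ℂ) := by push_cast; ring
  rw [hrot]
  refine le_min ?_ ?_
  · refine Real.norm_exp_I_mul_ofReal_sub_one_le.trans_eq ?_
    rw [Real.norm_eq_abs, abs_neg, abs_mul, abs_mul, abs_two]
  · calc ‖exp (I * ((-(2 * s * x) : ℝ) : ℂ)) - 1‖
          ≤ ‖exp (I * ((-(2 * s * x) : ℝ) : ℂ))‖ + ‖(1 : ℂ)‖ := norm_sub_le _ _
      _ = 2 := by rw [norm_exp_I_mul_ofReal, norm_one]; norm_num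

theorem norm_integral_exp_sub_one_mul_exp_sub_one_le {τ : ℝ} (hτ : 0 ≤ τ) (x y : ℝ) :
    ‖∫ s in (0 : ℝ)..τ, (exp (-(2 * I * s * x)) - 1) * (exp (-(2 * I * s * y)) - 1)‖
      ≤ 4 * τ ^ 2 * min |x| |y| := by
  have hpoint : ∀ s ∈ Set.uIoc (0 : ℝ) τ,
      ‖(exp (-(2 * I * s * x)) - 1) * (exp (-(2 * I * s * y)) - 1)‖ ≤ 4 * τ * min |x| |y| := by
    intro s hs
    rw [Set.uIoc_of_le hτ] at hs
    have hs' : |s| ≤ τ := by rw [abs_of_pos hs.1]; exact hs.2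
    have hx := norm_exp_neg_two_I_mul_sub_one_le s x
    have hy := norm_exp_neg_two_I_mul_sub_one_le s y
    rw [norm_mul]
    have hy0 := norm_nonneg (exp (-(2 * I * s * y)) - 1)
    rcases min_cases |x| |y| with ⟨hm, -⟩ | ⟨hm, -⟩ <;> rw [hm]
    · calc _ ≤ 2 * |s| * |x| * 2 := mul_le_mul (hx.trans (min_le_left _ _))
            (hy.trans (min_le_right _ _)) hy0 (by positivity)
        _ ≤ 4 * τ * |x| := by nlinarith [abs_nonneg x]
    · calc _ ≤ 2 * (2 * |s| * |y|) := mul_le_mul (hx.trans (min_le_right _ _))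
            (hy.trans (min_le_left _ _)) hy0 (by norm_num)
        _ ≤ 4 * τ * |y| := by nlinarith [abs_nonneg y]
  calc _ ≤ 4 * τ * min |x| |y| * |τ - 0| :=
        intervalIntegral.norm_integral_le_of_norm_le_const hpoint
    _ = 4 * τ ^ 2 * min |x| |y| := by rw [sub_zero, abs_of_nonneg hτ]; ring

theorem one_add_sq_le_two_mul (a b : ℝ) : 1 + a ^ 2 ≤ 2 * ((1 + b ^ 2) * (1 + (a - b) ^ 2)) := by
  nlinarith [sq_nonneg (b - (a - b)), sq_nonneg (b * (a - b))]

theorem min_sq_abs_mul_le (a b : ℝ) : min ((a - b) ^ 2) |a * b| ≤ 2 * |a| * √(1 + (a - b) ^ 2) := by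
  have hc : |a - b| ≤ √(1 + (a - b) ^ 2) :=
    Real.abs_le_sqrt (by linarith)
  have hb : |b| ≤ |a| + |a - b| := by
    simpa using abs_sub a (a - b)
  rcases le_or_gt |a - b| (2 * |a|) with h | h
  · refine (min_le_left _ _).trans ?_
    nlinarith [abs_nonneg (a - b), abs_nonneg a, sq_abs (a - b)]
  · refine (min_le_right _ _).trans ?_
    rw [abs_mul]
    nlinarith [abs_nonneg (a - b), abs_nonneg a, abs_nonneg b]

theorem sqrt_mul_sq_mul_min_le {a b : ℝ} (ha : 1 ≤ a ^ 2) :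
    √(1 + a ^ 2) * (b ^ 2 * min ((a - b) ^ 2) |a * b|)
      ≤ 2 * √2 * ((1 + b ^ 2) * √(1 + (a - b) ^ 2)) * a ^ 2 := by
  have hsqrt : √(1 + a ^ 2) ≤ √2 * |a| := by
    rw [← Real.sqrt_sq_eq_abs, ← Real.sqrt_mul zero_le_two]
    exact Real.sqrt_le_sqrt (by linarith)
  have hm0 : 0 ≤ min ((a - b) ^ 2) |a * b| := le_min (sq_nonneg _) (abs_nonneg _)
  calc √(1 + a ^ 2) * (b ^ 2 * min ((a - b) ^ 2) |a * b|)
      ≤ (√2 * |a|) * ((1 + b ^ 2) * (2 * |a| * √(1 + (a - b) ^ 2))) := by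
        gcongr
        · linarith
        · exact min_sq_abs_mul_le a b
    _ = 2 * √2 * ((1 + b ^ 2) * √(1 + (a - b) ^ 2)) * |a| ^ 2 := by ring
    _ = _ := by rw [sq_abs]

theorem rpow_mul_sq_div_sq_mul_min_le {r a b : ℝ} (hr : 1 ≤ r) (ha : 1 ≤ a ^ 2) :
    (1 + a ^ 2) ^ (r / 2) * (b ^ 2 / a ^ 2 * min ((a - b) ^ 2) |a * b|)
      ≤ 2 ^ ((r + 2) / 2) * ((1 + b ^ 2) ^ ((r + 1) / 2) * (1 + (a - b) ^ 2) ^ (r / 2)) := by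
  set e := (r - 1) / 2
  have he : 0 ≤ e := by simp only [e]; linarith
  have hw0 : 0 < 1 + a ^ 2 := by positivity
  have hw1 : 0 < 1 + b ^ 2 := by positivity
  have hw2 : 0 < 1 + (a - b) ^ 2 := by positivity
  have hpeetre : (1 + a ^ 2) ^ e ≤ 2 ^ e * ((1 + b ^ 2) ^ e * (1 + (a - b) ^ 2) ^ e) := by
    rw [← Real.mul_rpow hw1.le hw2.le, ← Real.mul_rpow zero_le_two (by positivity)]
    exact Real.rpow_le_rpow hw0.le (one_add_sq_le_two_mul a b) he
  have hsplit : ∀ {w : ℝ}, 0 < w → w ^ (r / 2) = w ^ e * √w := fun hw => by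
    rw [Real.sqrt_eq_rpow, ← Real.rpow_add hw]; congr 1; simp only [e]; ring
  have hsplit' : (1 + b ^ 2) ^ ((r + 1) / 2) = (1 + b ^ 2) ^ e * (1 + b ^ 2) := by
    rw [← Real.rpow_add_one hw1.ne']; congr 1; simp only [e]; ring
  have htwo : (2 : ℝ) ^ ((r + 2) / 2) = 2 ^ e * (2 * √2) := by
    rw [Real.sqrt_eq_rpow, ← Real.rpow_one_add' zero_le_two (by norm_num), ← Real.rpow_add two_pos]
    congr 1; simp only [e]; ring
  rw [div_mul_eq_mul_div, mul_div_assoc', div_le_iff₀ (by linarith), hsplit hw0, hsplit hw2,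
    hsplit', htwo]
  calc (1 + a ^ 2) ^ e * √(1 + a ^ 2) * (b ^ 2 * min ((a - b) ^ 2) |a * b|)
      = (1 + a ^ 2) ^ e * (√(1 + a ^ 2) * (b ^ 2 * min ((a - b) ^ 2) |a * b|)) := by ring
    _ ≤ (2 ^ e * ((1 + b ^ 2) ^ e * (1 + (a - b) ^ 2) ^ e))
          * (2 * √2 * ((1 + b ^ 2) * √(1 + (a - b) ^ 2)) * a ^ 2) :=
        mul_le_mul hpeetre (sqrt_mul_sq_mul_min_le ha) (by positivity) (by positivity)
    _ = _ := by ring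

def P1symbol (τ : ℝ) (k k₁ : ℤ) : ℂ :=
  if k = 0 then 0 else ((k₁ : ℂ) ^ 2 / (k : ℂ) ^ 2) *
    ∫ s in (0 : ℝ)..τ, (exp (-(2 * I * s * ((k - k₁ : ℤ) : ℂ) ^ 2)) - 1) *
      (exp (-(2 * I * s * (k : ℂ) * (k₁ : ℂ))) - 1)

theorem P1coef_eq_bilinearMultiplier (τ : ℝ) (f : 𝕋 → ℂ) :
    P1coef τ f = bilinearMultiplier (P1symbol τ) (fc (cconj f)) (fc (cconj f)) := by
  ext k
  by_cases hk : k = 0 <;> simp [P1coef, bilinearMultiplier, P1symbol, hk]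

theorem norm_P1symbol_le {r τ : ℝ} (hr : 1 ≤ r) (hτ : 0 ≤ τ) (k k₁ : ℤ) :
    (1 + (k : ℝ) ^ 2) ^ (r / 2) * ‖P1symbol τ k k₁‖
      ≤ 4 * 2 ^ ((r + 2) / 2) * τ ^ 2
        * ((1 + (k₁ : ℝ) ^ 2) ^ ((r + 1) / 2) * (1 + ((k - k₁ : ℤ) : ℝ) ^ 2) ^ (r / 2)) := by
  by_cases hk : k = 0
  · simp only [P1symbol, hk, if_true, norm_zero, mul_zero]
    positivity
  have hk2 : (1 : ℝ) ≤ (k : ℝ) ^ 2 := by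
    rw [one_le_sq_iff_one_le_abs]; exact_mod_cast Int.one_le_abs hk
  have hint := norm_integral_exp_sub_one_mul_exp_sub_one_le hτ (((k - k₁ : ℤ) : ℝ) ^ 2)
    ((k : ℝ) * k₁)
  push_cast [← mul_assoc] at hint
  rw [abs_sq] at hint
  have hsym := rpow_mul_sq_div_sq_mul_min_le (b := (k₁ : ℝ)) hr hk2
  have hnorm : ‖P1symbol τ k k₁‖ = (k₁ : ℝ) ^ 2 / (k : ℝ) ^ 2 * ‖∫ s in (0 : ℝ)..τ,
      (exp (-(2 * I * s * ((k : ℂ) - k₁) ^ 2)) - 1) * (exp (-(2 * I * s * k * k₁)) - 1)‖ := by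
    simp only [P1symbol, hk, if_false, norm_mul, norm_div, norm_pow, Complex.norm_intCast, sq_abs]
    push_cast
    rfl
  push_cast
  rw [hnorm]
  calc (1 + (k : ℝ) ^ 2) ^ (r / 2) * ((k₁ : ℝ) ^ 2 / (k : ℝ) ^ 2 * ‖_‖)
      ≤ (1 + (k : ℝ) ^ 2) ^ (r / 2) * ((k₁ : ℝ) ^ 2 / (k : ℝ) ^ 2
          * (4 * τ ^ 2 * min (((k : ℝ) - k₁) ^ 2) |(k : ℝ) * k₁|)) :=
        mul_le_mul_of_nonneg_left (mul_le_mul_of_nonneg_left hint (by positivity)) (by positivity)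
    _ = 4 * τ ^ 2 * ((1 + (k : ℝ) ^ 2) ^ (r / 2)
          * ((k₁ : ℝ) ^ 2 / (k : ℝ) ^ 2 * min (((k : ℝ) - k₁) ^ 2) |(k : ℝ) * k₁|)) := by ring
    _ ≤ 4 * τ ^ 2 * (2 ^ ((r + 2) / 2)
          * ((1 + (k₁ : ℝ) ^ 2) ^ ((r + 1) / 2) * (1 + ((k : ℝ) - k₁) ^ 2) ^ (r / 2))) :=
        mul_le_mul_of_nonneg_left hsym (by positivity)
    _ = _ := by ring

theorem stmt13 (r : ℝ) (hr : 1 ≤ r) :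
    ∃ C > (0:ℝ), ∀ τ : ℝ, 0 < τ → ∀ f : 𝕋 → ℂ, MemH (r + 1) f →
      seqNorm r (P1coef τ f) ≤ C * τ^2 * (sNorm (r + 1) f)^2 := by
  have hK : 0 < ∑' j : ℤ, (1 + (j : ℝ) ^ 2)⁻¹ :=
    summable_inv_one_add_sq.tsum_pos (fun j => by positivity) 0 (by norm_num)
  refine ⟨4 * 2 ^ ((r + 2) / 2) * √(∑' j : ℤ, (1 + (j : ℝ) ^ 2)⁻¹), by positivity, ?_⟩
  intro τ hτ f hf
  have hbound := seqNorm_bilinearMultiplier_le (by positivity) (norm_P1symbol_le hr hτ.le)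
    hf.summable_fc_cconj hf.summable_fc_cconj
  rw [P1coef_eq_bilinearMultiplier]
  refine hbound.trans_eq ?_
  rw [seqNorm_fc_cconj]
  ring
end
end
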